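/- arXiv:1203.0383 — 2 statements merged into one kernel-verified Lean document; each statement's English description precedes it below -/
import Mathlib

section
/- Let V be a finitely generated free abelian group (e.g. ℤ^m) and B : V → V an injective endomorphism with inverse defined over ℚ. Let Γ = ⋃_{r≥0} B^{-r}(V) inside V ⊗ ℚ. Then for ε ∈ {1,-1}, the natural map V/(1-εB)V → Γ/(1-εB)Γ induced by inclusion is an isomorphism of abelian groups, provided that for every r ≥ 0 there is an integer polynomial p_r with p_r(B)(1-εB) + (εB)^r = 1 on Γ (which holds since 1-(εB)^r is divisible by 1-εB in ℤ[B]). -/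
/-!
Write `T = εB`; since `ε = ±1`, `Γ = ⋃_r T^{-r}(L)`. As `(1 - T) * ∑_{i<r} T^i = 1 - T^r`, an
`x ∈ Γ` with `T^r x ∈ L` is congruent to `T^r x ∈ L` modulo `(1 - T)` of the geometric sum
`∑_{i<r} T^i x`, which again lies in `Γ`: this is surjectivity.
For injectivity, if `T^r x ∈ L` and `(1 - T) x ∈ L` then `T x` satisfies the same hypotheses
with `r - 1` in place of `r`, and `x = (1 - T) x + T x`; induction on `r` gives `x ∈ L`.
-/

open Finset

namespace Module.End

variable {R M : Type*} [Ring R] [AddCommGroup M] [Module R M]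

theorem sub_pow_apply_eq_one_sub_apply_geom_sum (T : Module.End R M) (r : ℕ) (x : M) :
    x - (T ^ r) x = (1 - T) (∑ i ∈ range r, (T ^ i) x) := by
  rw [← LinearMap.sum_apply, ← Module.End.mul_apply, mul_neg_geom_sum]
  rfl

theorem pow_apply_geom_sum_mem {T : Module.End R M} {L : AddSubgroup M} (hT : Set.MapsTo T L L)
    {r : ℕ} {x : M} (hx : (T ^ r) x ∈ L) : (T ^ r) (∑ i ∈ range r, (T ^ i) x) ∈ L := by
  rw [map_sum]
  refine L.sum_mem fun i _ => ?_
  rw [← Module.End.mul_apply, ← pow_mul_comm, Module.End.mul_apply, Module.End.pow_apply]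
  exact hT.iterate i hx

theorem mem_of_pow_apply_mem_of_sub_apply_mem {T : Module.End R M} {L : AddSubgroup M}
    (hT : Set.MapsTo T L L) {r : ℕ} {x : M} (hx : (T ^ r) x ∈ L) (hsub : x - T x ∈ L) :
    x ∈ L := by
  induction r generalizing x with
  | zero => simpa using hx
  | succ r ih =>
    have hTx : T x ∈ L := by
      refine ih (by rwa [pow_succ, Module.End.mul_apply] at hx) ?_
      rw [← map_sub]
      exact hT hsub
    simpa using L.add_mem hsub hTx

end Module.End

theorem pow_smul_mem_iff_of_eq_one_or_eq_neg_one {R M : Type*} [Ring R] [AddCommGroup M]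
    [Module R M] {L : AddSubgroup M} {ε : R} (hε : ε = 1 ∨ ε = -1) (r : ℕ) (v : M) :
    ε ^ r • v ∈ L ↔ v ∈ L := by
  rcases hε with rfl | rfl
  · rw [one_pow, one_smul]
  · rcases neg_one_pow_eq_or R r with h | h <;> simp [h]

theorem AddSubgroup.coe_pi_range_intCast (ι R : Type*) [AddGroupWithOne R] :
    ((AddSubgroup.pi Set.univ fun _ => (Int.castAddHom R).range : AddSubgroup (ι → R)) :
      Set (ι → R)) = {x | ∀ i, ∃ n : ℤ, x i = (n : R)} := by
  ext x
  simp [AddSubgroup.mem_pi, AddSubgroup.mem_zmultiples_iff, eq_comm]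

/-- Let `V = ℤ^m` sit as the lattice `L` inside `ℚ^m`, let `B` be a `ℚ`-linear
automorphism of `ℚ^m` mapping `L` into itself (an injective endomorphism of `L`
with inverse defined over `ℚ`), and let `Γ = ⋃_{r ≥ 0} B^{-r}(L)`.  For
`ε ∈ {1, -1}`, the natural map `L/(1-εB)L → Γ/(1-εB)Γ` induced by the inclusion
is an isomorphism of abelian groups, i.e. every element of `Γ` is congruent
mod `(1-εB)Γ` to an element of `L` (surjectivity) and an element of `L` lying
in `(1-εB)Γ` already lies in `(1-εB)L` (injectivity). -/
theorem stmt_0 (m : ℕ) (B : (Fin m → ℚ) ≃ₗ[ℚ] (Fin m → ℚ))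
    (L : Set (Fin m → ℚ)) (hL : L = {x | ∀ i, ∃ n : ℤ, x i = (n : ℚ)})
    (hB : ∀ v ∈ L, B v ∈ L)
    (ε : ℚ) (hε : ε = 1 ∨ ε = -1)
    (Γ : Set (Fin m → ℚ)) (hΓ : Γ = {x | ∃ r : ℕ, (B ^ r) x ∈ L})
    (N : Set (Fin m → ℚ)) (hN : N = (fun x => x - ε • B x) '' Γ) :
    (∀ x ∈ Γ, ∃ w ∈ L, x - w ∈ N) ∧
      (∀ v ∈ L, v ∈ N → ∃ w ∈ L, v = w - ε • B w) := by
  obtain ⟨Λ, rfl⟩ : ∃ Λ : AddSubgroup (Fin m → ℚ), (Λ : Set _) = L :=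
    ⟨_, hL ▸ AddSubgroup.coe_pi_range_intCast (Fin m) ℚ⟩
  subst hΓ hN
  set T : Module.End ℚ (Fin m → ℚ) := ε • (B : Module.End ℚ (Fin m → ℚ))
  have hTpow (r : ℕ) (x : Fin m → ℚ) : (T ^ r) x ∈ Λ ↔ (B ^ r) x ∈ Λ := by
    rw [smul_pow, LinearMap.smul_apply, Module.End.pow_apply, LinearEquiv.coe_pow,
      pow_smul_mem_iff_of_eq_one_or_eq_neg_one hε]
    rfl
  have hT : Set.MapsTo T Λ Λ := fun v hv => (hTpow 1 v).2 (by simpa using hB v hv)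
  refine ⟨?_, ?_⟩
  · rintro x ⟨r, hr⟩
    rw [SetLike.mem_coe, ← hTpow] at hr
    exact ⟨(T ^ r) x, hr, _, ⟨r, (hTpow r _).1 (Module.End.pow_apply_geom_sum_mem hT hr)⟩,
      (Module.End.sub_pow_apply_eq_one_sub_apply_geom_sum T r x).symm⟩
  · rintro v hv ⟨x, ⟨r, hr⟩, rfl⟩
    exact ⟨x, Module.End.mem_of_pow_apply_mem_of_sub_apply_mem hT ((hTpow r x).2 hr) hv, rfl⟩
end

section
/- Let A ∈ M_d(ℤ) be an integer dilation matrix and Γ_n, A_n = Λⁿ(A) as above. If v ∈ Λⁿ(ℤ^d) lies in (1 - A_n)Γ_n, then v ∈ (1 - A_n)Λⁿ(ℤ^d). Concretely: if v = (1 - A_n)A_n^{-r}w for some w ∈ Λⁿ(ℤ^d) and r ≥ 0, then A_n^{-r}w ∈ Λⁿ(ℤ^d). -/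
/-- `subdet A m K L` is the determinant of the `m × m` submatrix of `A` with rows
from `K` and columns from `L` (each listed in increasing order), when
`|K| = |L| = m`, and `0` otherwise. -/
noncomputable def subdet {R : Type*} [CommRing R] {d : ℕ}
    (A : Matrix (Fin d) (Fin d) R) (m : ℕ) (K L : Finset (Fin d)) : R :=
  if h : K.card = m ∧ L.card = m then
    (A.submatrix (fun i : Fin m => ((K.orderIsoOfFin h.1) i : Fin d))
      (fun j : Fin m => ((L.orderIsoOfFin h.2) j : Fin d))).det
  else 0

/-- The matrix of the induced map `Λⁿ(A)` on the `n`-th exterior power in the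
standard basis `{e_I : |I| = n}`: its `(J, K)` entry is `det(A_{J,K})`. -/
noncomputable def extPow {R : Type*} [CommRing R] {d : ℕ}
    (A : Matrix (Fin d) (Fin d) R) (n : ℕ) :
    Matrix {s : Finset (Fin d) // s.card = n} {s : Finset (Fin d) // s.card = n} R :=
  fun K L => subdet A n K.1 L.1

/-! Since `A` is an integer matrix, so is `Aₙ = Λⁿ(A)`. From `(∑_{i<r} Aₙⁱ)(1 - Aₙ) + Aₙʳ = 1`
we get `Aₙ⁻ʳ = (∑_{i<r} Aₙⁱ)(1 - Aₙ)Aₙ⁻ʳ + 1`, so `Aₙ⁻ʳ w = (∑_{i<r} Aₙⁱ) v + w`, which is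
integral whenever `v` and `w` are. -/

open Finset Matrix

theorem extPow_map {R S : Type*} [CommRing R] [CommRing S] {d : ℕ} (f : R →+* S)
    (A : Matrix (Fin d) (Fin d) R) (n : ℕ) : extPow (A.map f) n = (extPow A n).map f := by
  ext K L
  simp only [extPow, subdet, map_apply]
  split_ifs
  · rw [RingHom.map_det]; rfl
  · simp

theorem pow_eq_geom_sum_mul_sub_mul_pow_add_one {R : Type*} [Ring R] {a b : R} (h : a * b = 1)
    (r : ℕ) : b ^ r = (∑ i ∈ range r, a ^ i) * ((1 - a) * b ^ r) + 1 := by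
  rw [← mul_assoc, geom_sum_mul_neg, sub_mul, one_mul, pow_mul_pow_eq_one r h, sub_add_cancel]

theorem exists_map_mulVec_apply_eq {R S m n : Type*} [Fintype n] [NonAssocSemiring R]
    [NonAssocSemiring S] (f : R →+* S) (M : Matrix m n R) {x : n → S}
    (hx : ∀ j, ∃ y, x j = f y) (i : m) : ∃ y, (M.map f *ᵥ x) i = f y := by
  choose y hy using hx
  obtain rfl : x = f ∘ y := funext hy
  exact ⟨_, (f.map_mulVec M y i).symm⟩

theorem stmt_17_general (d n : ℕ)
    (A : Matrix (Fin d) (Fin d) ℤ)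
    (An Binv : Matrix {s : Finset (Fin d) // s.card = n}
      {s : Finset (Fin d) // s.card = n} ℚ)
    (hAn : An = extPow (A.map (Int.cast : ℤ → ℚ)) n)
    (hBinv : An * Binv = 1 ∧ Binv * An = 1)
    (Lat : Set ({s : Finset (Fin d) // s.card = n} → ℚ))
    (hLat : Lat = {x | ∀ K, ∃ m : ℤ, x K = (m : ℚ)})
    (v w : {s : Finset (Fin d) // s.card = n} → ℚ) (r : ℕ)
    (hv : v ∈ Lat) (hw : w ∈ Lat)
    (heq : v = (Binv ^ r).mulVec w - An.mulVec ((Binv ^ r).mulVec w)) :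
    (Binv ^ r).mulVec w ∈ Lat := by
  set P := ∑ i ∈ range r, An ^ i
  have hsolve : (Binv ^ r) *ᵥ w = P *ᵥ v + w := calc
    (Binv ^ r) *ᵥ w = (P * ((1 - An) * Binv ^ r) + 1) *ᵥ w := by
      rw [← pow_eq_geom_sum_mul_sub_mul_pow_add_one hBinv.1]
    _ = P *ᵥ v + w := by
      rw [heq, add_mulVec, one_mulVec, ← mulVec_mulVec, ← mulVec_mulVec, sub_mulVec, one_mulVec]
  have hAn_int : An = (Int.castRingHom ℚ).mapMatrix (extPow A n) :=
    hAn.trans (extPow_map (Int.castRingHom ℚ) A n)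
  have hP : P = (Int.castRingHom ℚ).mapMatrix (∑ i ∈ range r, extPow A n ^ i) := by
    simp only [P, hAn_int, map_sum, map_pow]
  subst hLat
  intro K
  obtain ⟨a, ha⟩ :=
    exists_map_mulVec_apply_eq (Int.castRingHom ℚ) (∑ i ∈ range r, extPow A n ^ i) hv K
  obtain ⟨b, hb⟩ := hw K
  refine ⟨a + b, ?_⟩
  rw [hsolve, Pi.add_apply, hP, RingHom.mapMatrix_apply, ha, hb, Int.cast_add]
  rfl

/-- Let `A ∈ M_d(ℤ)` be an integer dilation matrix, `A_n = Λⁿ(A)` (with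
inverse `Binv` over `ℚ`), and `Lat = Λⁿ(ℤ^d)`.  If `v ∈ Lat` can be written as
`v = (1 - A_n)(A_n^{-r} w)` with `w ∈ Lat` and `r ≥ 0`, then `A_n^{-r} w ∈ Lat`;
hence `v` lies in `(1 - A_n) Lat`. -/
theorem stmt_17 (d n : ℕ) (hn : 1 ≤ n) (hnd : n ≤ d)
    (A : Matrix (Fin d) (Fin d) ℤ)
    (hdil : ∀ μ ∈ spectrum ℂ (A.map (Int.cast : ℤ → ℂ)), 1 < ‖μ‖)
    (An Binv : Matrix {s : Finset (Fin d) // s.card = n}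
      {s : Finset (Fin d) // s.card = n} ℚ)
    (hAn : An = extPow (A.map (Int.cast : ℤ → ℚ)) n)
    (hBinv : An * Binv = 1 ∧ Binv * An = 1)
    (Lat : Set ({s : Finset (Fin d) // s.card = n} → ℚ))
    (hLat : Lat = {x | ∀ K, ∃ m : ℤ, x K = (m : ℚ)})
    (v w : {s : Finset (Fin d) // s.card = n} → ℚ) (r : ℕ)
    (hv : v ∈ Lat) (hw : w ∈ Lat)
    (heq : v = (Binv ^ r).mulVec w - An.mulVec ((Binv ^ r).mulVec w)) :
    (Binv ^ r).mulVec w ∈ Lat :=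
  stmt_17_general d n A An Binv hAn hBinv Lat hLat v w r hv hw heq
end
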